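/- arXiv:2207.09545 — 5 statements merged into one kernel-verified Lean document; each statement's English description precedes it below -/
import Mathlib

section
/- Let T be a finite index set and p : T → ℝ with 0 ≤ p i ≤ Δ ≤ 1/4 for all i ∈ T. Then ∏_{i∈T} (1 − 2 p i) ≤ e^{−∑_{i∈T} 2(p i + (p i)²)} and ∏_{i∈T} (1 − 2 p i) ≥ e^{−∑_{i∈T} 2(p i + (p i)²)} − |T| · 8Δ³. -/
open Real Finset

-- pointwise upper: 1 - 2p ≤ exp(-2(p+p²)) for 0 ≤ p ≤ 1/4
lemma ptA {x : ℝ} (h0 : 0 ≤ x) (h1 : x ≤ 1/4) :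
    1 - 2*x ≤ Real.exp (-(2*(x + x^2))) := by
  set t : ℝ := 2*(x + x^2) with ht
  have ht0 : 0 ≤ t := by positivity
  have ht1 : t ≤ 1 := by nlinarith
  -- exp t ≤ 1 + t + t²/2 + (2/9) t³
  have hb := Real.exp_bound' ht0 ht1 (n := 3) (by norm_num)
  have hb' : Real.exp t ≤ 1 + t + t^2/2 + (2/9) * t^3 := by
    norm_num [Finset.sum_range_succ, Nat.factorial] at hb
    nlinarith [hb]
  have key : (1 - 2*x) * Real.exp t ≤ 1 := by
    have hx : (1 - 2*x) ≥ 0 := by linarith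
    calc (1 - 2*x) * Real.exp t ≤ (1 - 2*x) * (1 + t + t^2/2 + (2/9)*t^3) := by
          exact mul_le_mul_of_nonneg_left hb' hx
      _ ≤ 1 := by rw [ht]; nlinarith [sq_nonneg x, pow_le_pow_left₀ h0 h1 3, sq_nonneg (x*x)]
  have hexp : Real.exp (-t) = 1 / Real.exp t := by
    rw [Real.exp_neg]; ring
  rw [hexp]
  rw [le_div_iff₀ (Real.exp_pos t)]
  linarith [key]

-- pointwise lower: exp(-2(p+p²)) ≤ 1 - 2p + 8p³ for 0 ≤ p ≤ 1/4
lemma ptB {x : ℝ} (h0 : 0 ≤ x) (h1 : x ≤ 1/4) :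
    Real.exp (-(2*(x + x^2))) ≤ 1 - 2*x + 8*x^3 := by
  set t : ℝ := 2*(x + x^2) with ht
  have ht0 : 0 ≤ t := by positivity
  have hq := Real.quadratic_le_exp_of_nonneg ht0
  have hpos : (0:ℝ) < 1 + t + t^2/2 := by nlinarith
  have h2 : Real.exp (-t) ≤ 1 / (1 + t + t^2/2) := by
    rw [Real.exp_neg, inv_eq_one_div]
    exact one_div_le_one_div_of_le hpos hq
  have h3 : 1 / (1 + t + t^2/2) ≤ 1 - t + t^2/2 := by
    rw [div_le_iff₀ hpos]
    nlinarith [sq_nonneg t, sq_nonneg (t^2)]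
  have h4 : 1 - t + t^2/2 ≤ 1 - 2*x + 8*x^3 := by
    rw [ht]; nlinarith [pow_nonneg h0 3, pow_nonneg h0 4]
  linarith [h2, h3, h4]

-- product difference bound
lemma prod_sub_prod_le {ι : Type*} (T : Finset ι) (a b : ι → ℝ)
    (h0 : ∀ i ∈ T, 0 ≤ a i) (hab : ∀ i ∈ T, a i ≤ b i) (hb1 : ∀ i ∈ T, b i ≤ 1) :
    ∏ i ∈ T, b i - ∏ i ∈ T, a i ≤ ∑ i ∈ T, (b i - a i) := by
  induction T using Finset.cons_induction with
  | empty => simp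
  | cons j s hj ih =>
    simp only [Finset.prod_cons, Finset.sum_cons]
    have h0' := fun i hi => h0 i (Finset.mem_cons_of_mem hi)
    have hab' := fun i hi => hab i (Finset.mem_cons_of_mem hi)
    have hb1' := fun i hi => hb1 i (Finset.mem_cons_of_mem hi)
    have ih' := ih h0' hab' hb1'
    have hja := h0 j (Finset.mem_cons_self j s)
    have hjab := hab j (Finset.mem_cons_self j s)
    have hjb := hb1 j (Finset.mem_cons_self j s)
    have hpa0 : 0 ≤ ∏ i ∈ s, a i := Finset.prod_nonneg h0'
    have hpa1 : ∏ i ∈ s, a i ≤ 1 :=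
      Finset.prod_le_one h0' (fun i hi => (hab' i hi).trans (hb1' i hi))
    have hpb : ∏ i ∈ s, a i ≤ ∏ i ∈ s, b i := Finset.prod_le_prod h0' hab'
    have hj0 : 0 ≤ b j := le_trans hja hjab
    nlinarith [mul_le_mul_of_nonneg_left ih' hj0,
      mul_le_mul_of_nonneg_right (sub_nonneg.mpr hjab) hpa0]

theorem stmt_3 {ι : Type*} (T : Finset ι) (p : ι → ℝ) (Δ : ℝ)
    (hΔ : Δ ≤ 1/4) (hp : ∀ i ∈ T, 0 ≤ p i ∧ p i ≤ Δ) :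
    ∏ i ∈ T, (1 - 2 * p i) ≤ Real.exp (-∑ i ∈ T, 2 * (p i + (p i)^2)) ∧
    Real.exp (-∑ i ∈ T, 2 * (p i + (p i)^2)) - T.card * (8 * Δ^3)
      ≤ ∏ i ∈ T, (1 - 2 * p i) := by
  have hpi : ∀ i ∈ T, 0 ≤ p i ∧ p i ≤ 1/4 :=
    fun i hi => ⟨(hp i hi).1, (hp i hi).2.trans hΔ⟩
  have hexp : Real.exp (-∑ i ∈ T, 2 * (p i + (p i)^2))
      = ∏ i ∈ T, Real.exp (-(2 * (p i + (p i)^2))) := by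
    rw [← Real.exp_sum]
    congr 1
    rw [← Finset.sum_neg_distrib]
  constructor
  · rw [hexp]
    apply Finset.prod_le_prod
    · intro i hi
      have := hpi i hi
      linarith [this.1, this.2]
    · intro i hi
      exact ptA (hpi i hi).1 (hpi i hi).2
  · rcases T.eq_empty_or_nonempty with rfl | ⟨i0, hi0⟩
    · simp
    · have hΔ0 : 0 ≤ Δ := le_trans (hp i0 hi0).1 (hp i0 hi0).2
      rw [hexp]
      have key := prod_sub_prod_le T (fun i => 1 - 2 * p i)
        (fun i => Real.exp (-(2 * (p i + (p i)^2))))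
        (fun i hi => by have := hpi i hi; linarith [this.1, this.2])
        (fun i hi => ptA (hpi i hi).1 (hpi i hi).2)
        (fun i hi => by
          rw [← Real.exp_zero]
          apply Real.exp_le_exp.mpr
          have := hpi i hi
          nlinarith [this.1, sq_nonneg (p i)])
      have hsum : ∑ i ∈ T, (Real.exp (-(2 * (p i + (p i)^2))) - (1 - 2 * p i))
          ≤ T.card * (8 * Δ^3) := by
        calc ∑ i ∈ T, (Real.exp (-(2 * (p i + (p i)^2))) - (1 - 2 * p i))
            ≤ ∑ i ∈ T, (8 * Δ^3) := by
              apply Finset.sum_le_sum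
              intro i hi
              have h := hpi i hi
              have hb := ptB h.1 h.2
              have hcube : (p i)^3 ≤ Δ^3 := pow_le_pow_left₀ h.1 (hp i hi).2 3
              linarith
          _ = T.card * (8 * Δ^3) := by rw [Finset.sum_const]; simp [mul_comm]
      linarith [key, hsum]
end

section
/- Let T be a finite index set and p : T → ℝ with 0 ≤ p i ≤ Δ ≤ 1/2 for all i ∈ T. Then ∏_{i∈T} (1 − p i) ≤ e^{−∑_{i∈T} (p i + (p i)²/2)} and ∏_{i∈T} (1 − p i) ≥ e^{−∑_{i∈T} (p i + (p i)²/2)} − |T| · Δ³. -/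
private lemma exp_taylor_bound {t : ℝ} (h0 : 0 ≤ t) (h1 : t ≤ 1) :
    1 - t + t^2/2 - t^3/6 - 5*t^4/96 ≤ Real.exp (-t) ∧
    Real.exp (-t) ≤ 1 - t + t^2/2 - t^3/6 + 5*t^4/96 := by
  have hx : |(-t)| ≤ 1 := by rw [abs_neg, abs_of_nonneg h0]; exact h1
  have h := Real.exp_bound hx (n := 4) (by norm_num)
  have hs : ∑ m ∈ Finset.range 4, (-t) ^ m / (m.factorial : ℝ)
      = 1 - t + t^2/2 - t^3/6 := by
    simp [Finset.sum_range_succ, Nat.factorial]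
    ring
  rw [hs, abs_neg, abs_of_nonneg h0] at h
  have h4 : t ^ 4 * ((4:ℕ).succ / ((4:ℕ).factorial * (4:ℕ)) : ℝ) = 5*t^4/96 := by
    norm_num [Nat.factorial]; ring
  rw [h4] at h
  constructor <;> nlinarith [abs_sub_le_iff.1 h]

private lemma pow_succ_le_half {x : ℝ} (h0 : 0 ≤ x) (h1 : x ≤ 1/2) (k : ℕ) :
    x^(k+1) ≤ x^k / 2 := by
  have := mul_le_mul_of_nonneg_left h1 (pow_nonneg h0 k)
  calc x^(k+1) = x^k * x := by ring
    _ ≤ x^k * (1/2) := this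
    _ = x^k / 2 := by ring

private lemma factor_lb {x : ℝ} (h0 : 0 ≤ x) (h1 : x ≤ 1/2) :
    1 - x ≤ Real.exp (-(x + x^2/2)) := by
  have ht0 : 0 ≤ x + x^2/2 := by positivity
  have ht1 : x + x^2/2 ≤ 1 := by nlinarith
  have h := (exp_taylor_bound ht0 ht1).1
  have hpoly : 1 - x ≤ 1 - (x + x^2/2) + (x + x^2/2)^2/2 - (x + x^2/2)^3/6
      - 5*(x + x^2/2)^4/96 := by
    linarith [pow_succ_le_half h0 h1 3, pow_succ_le_half h0 h1 4,
      pow_succ_le_half h0 h1 5, pow_succ_le_half h0 h1 6, pow_succ_le_half h0 h1 7,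
      pow_nonneg h0 3]
  linarith

private lemma factor_ub {x : ℝ} (h0 : 0 ≤ x) (h1 : x ≤ 1/2) :
    Real.exp (-(x + x^2/2)) ≤ 1 - x + x^3 := by
  have ht0 : 0 ≤ x + x^2/2 := by positivity
  have ht1 : x + x^2/2 ≤ 1 := by nlinarith
  have h := (exp_taylor_bound ht0 ht1).2
  have hpoly : 1 - (x + x^2/2) + (x + x^2/2)^2/2 - (x + x^2/2)^3/6
      + 5*(x + x^2/2)^4/96 ≤ 1 - x + x^3 := by
    linarith [pow_succ_le_half h0 h1 3, pow_succ_le_half h0 h1 4,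
      pow_succ_le_half h0 h1 5, pow_succ_le_half h0 h1 6, pow_succ_le_half h0 h1 7,
      pow_nonneg h0 3, pow_nonneg h0 4, pow_nonneg h0 5]
  linarith

private lemma prod_close {ι : Type*} (s : Finset ι) (a b : ι → ℝ) (ε : ℝ) (hε : 0 ≤ ε)
    (h0 : ∀ i ∈ s, 0 ≤ a i) (hab : ∀ i ∈ s, a i ≤ b i) (hb1 : ∀ i ∈ s, b i ≤ 1)
    (hba : ∀ i ∈ s, b i ≤ a i + ε) :
    ∏ i ∈ s, b i ≤ (∏ i ∈ s, a i) + s.card * ε := by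
  induction s using Finset.cons_induction with
  | empty => simp
  | cons j s hj ih =>
    simp only [Finset.prod_cons, Finset.card_cons] at *
    have h0j := h0 j (by simp)
    have habj := hab j (by simp)
    have hb1j := hb1 j (by simp)
    have hbaj := hba j (by simp)
    have h0' : ∀ i ∈ s, 0 ≤ a i := fun i hi => h0 i (by simp [hi])
    have hab' : ∀ i ∈ s, a i ≤ b i := fun i hi => hab i (by simp [hi])
    have hb1' : ∀ i ∈ s, b i ≤ 1 := fun i hi => hb1 i (by simp [hi])
    have hba' : ∀ i ∈ s, b i ≤ a i + ε := fun i hi => hba i (by simp [hi])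
    have ihs := ih h0' hab' hb1' hba'
    have hpa0 : 0 ≤ ∏ i ∈ s, a i := Finset.prod_nonneg h0'
    have hpa1 : ∏ i ∈ s, a i ≤ 1 :=
      Finset.prod_le_one h0' (fun i hi => (hab' i hi).trans (hb1' i hi))
    have hb0j : 0 ≤ b j := h0j.trans habj
    have hc : (0:ℝ) ≤ s.card * ε := by positivity
    have s1 : b j * ∏ i ∈ s, b i ≤ b j * ((∏ i ∈ s, a i) + s.card * ε) :=
      mul_le_mul_of_nonneg_left ihs hb0j
    have s2 : b j * ∏ i ∈ s, a i ≤ (a j + ε) * ∏ i ∈ s, a i :=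
      mul_le_mul_of_nonneg_right hbaj hpa0
    have s3 : ε * ∏ i ∈ s, a i ≤ ε := mul_le_of_le_one_right hε hpa1
    have s4 : b j * ((s.card : ℝ) * ε) ≤ (s.card : ℝ) * ε :=
      mul_le_of_le_one_left hc hb1j
    push_cast
    nlinarith [s1, s2, s3, s4]

theorem stmt_4 {ι : Type*} (T : Finset ι) (p : ι → ℝ) (Δ : ℝ)
    (hΔ : Δ ≤ 1/2) (hp : ∀ i ∈ T, 0 ≤ p i ∧ p i ≤ Δ) :
    ∏ i ∈ T, (1 - p i) ≤ Real.exp (-∑ i ∈ T, (p i + (p i)^2 / 2)) ∧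
    Real.exp (-∑ i ∈ T, (p i + (p i)^2 / 2)) - T.card * Δ^3
      ≤ ∏ i ∈ T, (1 - p i) := by
  have hexp : Real.exp (-∑ i ∈ T, (p i + (p i)^2 / 2))
      = ∏ i ∈ T, Real.exp (-(p i + (p i)^2/2)) := by
    rw [← Real.exp_sum, ← Finset.sum_neg_distrib]
  have hx : ∀ i ∈ T, 0 ≤ p i ∧ p i ≤ 1/2 :=
    fun i hi => ⟨(hp i hi).1, (hp i hi).2.trans hΔ⟩
  rcases T.eq_empty_or_nonempty with rfl | ⟨j, hj⟩
  · norm_num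
  have hΔ0 : 0 ≤ Δ := (hp j hj).1.trans (hp j hj).2
  have hab : ∀ i ∈ T, 1 - p i ≤ Real.exp (-(p i + (p i)^2/2)) :=
    fun i hi => factor_lb (hx i hi).1 (hx i hi).2
  constructor
  · rw [hexp]
    exact Finset.prod_le_prod (fun i hi => by nlinarith [(hx i hi).2]) hab
  · rw [hexp, sub_le_iff_le_add]
    apply prod_close T (fun i => 1 - p i) _ _ (pow_nonneg hΔ0 3)
    · intro i hi; nlinarith [(hx i hi).2]
    · exact hab
    · intro i hi
      rw [Real.exp_le_one_iff]
      nlinarith [(hx i hi).1, sq_nonneg (p i)]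
    · intro i hi
      have := factor_ub (hx i hi).1 (hx i hi).2
      have h3 : (p i)^3 ≤ Δ^3 := by
        gcongr
        exacts [(hx i hi).1, (hp i hi).2]
      linarith
end

section
/- Let X₁, ..., Xₙ be independent nonnegative real random variables and τ₁, ..., τₙ reals, and set κᵢ = min(Xᵢ, τᵢ). Suppose a random variable pair (Aᵢ, Iᵢ) for each i satisfies: each Aᵢ, Iᵢ ∈ {0,1}, Aᵢ ≤ Iᵢ almost surely, ∑ᵢ Aᵢ ≤ 1 almost surely, Iᵢ is independent of Xᵢ, and cᵢ = E[(Xᵢ − τᵢ)₊]. Then E[∑ᵢ (Aᵢ Xᵢ − Iᵢ cᵢ)] ≤ E[maxᵢ κᵢ] (where the maximum over an empty index set is 0 if no Aᵢ = 1, and κᵢ ≥ 0 can be assumed by taking τᵢ ≥ 0). -/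
/-!
Write `gᵢ = (Xᵢ - τᵢ)₊`, so that `Xᵢ = κᵢ + gᵢ`. Since `Iᵢ` is independent of `Xᵢ`,
`E[Iᵢ cᵢ] = E[Iᵢ gᵢ]`, so the expected payoff equals `E[∑ᵢ (Aᵢ Xᵢ - Iᵢ gᵢ)]`. Pointwise,
`Aᵢ Xᵢ - Iᵢ gᵢ = Aᵢ κᵢ - (Iᵢ - Aᵢ) gᵢ ≤ Aᵢ κᵢ`, and as at most one box is taken and `κᵢ ≥ 0`,
`∑ᵢ Aᵢ κᵢ ≤ maxᵢ κᵢ`.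
-/

open MeasureTheory ProbabilityTheory

theorem mul_sub_mul_posPart_le_mul_min {a b x t : ℝ} (hab : a ≤ b) :
    a * x - b * max (x - t) 0 ≤ a * min x t := by
  have hsplit : x = min x t + max (x - t) 0 := by
    rcases le_total x t with h | h
    · rw [min_eq_left h, max_eq_right (by linarith)]; ring
    · rw [min_eq_right h, max_eq_left (by linarith)]; ring
  have hpos : 0 ≤ max (x - t) 0 := le_max_right _ _
  nlinarith [mul_le_mul_of_nonneg_right hab hpos, congrArg (a * ·) hsplit]

theorem sum_mul_le_iSup {ι : Type*} [Fintype ι] {a κ : ι → ℝ} (ha : ∀ i, 0 ≤ a i)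
    (hsum : ∑ i, a i ≤ 1) (hκ : ∀ i, 0 ≤ κ i) :
    ∑ i, a i * κ i ≤ ⨆ i, κ i := by
  have hle : ∀ i, κ i ≤ ⨆ i, κ i := le_ciSup (Set.finite_range κ).bddAbove
  calc ∑ i, a i * κ i ≤ ∑ i, a i * ⨆ i, κ i :=
        Finset.sum_le_sum fun i _ => mul_le_mul_of_nonneg_left (hle i) (ha i)
    _ = (∑ i, a i) * ⨆ i, κ i := Finset.sum_mul _ _ _ |>.symm
    _ ≤ ⨆ i, κ i := mul_le_of_le_one_left (Real.iSup_nonneg hκ) hsum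

theorem sum_mul_sub_mul_posPart_le_iSup_min {ι : Type*} [Fintype ι] {a b x t : ι → ℝ}
    (ha : ∀ i, 0 ≤ a i) (hab : ∀ i, a i ≤ b i) (hsum : ∑ i, a i ≤ 1)
    (hx : ∀ i, 0 ≤ x i) (ht : ∀ i, 0 ≤ t i) :
    ∑ i, (a i * x i - b i * max (x i - t i) 0) ≤ ⨆ i, min (x i) (t i) :=
  (Finset.sum_le_sum fun i _ => mul_sub_mul_posPart_le_mul_min (hab i)).trans
    (sum_mul_le_iSup ha hsum fun i => le_min (hx i) (ht i))

theorem norm_le_one_of_eq_zero_or_eq_one {a : ℝ} (h : a = 0 ∨ a = 1) : ‖a‖ ≤ 1 := by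
  rcases h with rfl | rfl <;> simp

section Integral

variable {Ω : Type*} [MeasurableSpace Ω] {μ : Measure Ω}

theorem integral_sum_congr {ι : Type*} [Fintype ι] {F G : ι → Ω → ℝ}
    (hF : ∀ i, Integrable (F i) μ) (hG : ∀ i, Integrable (G i) μ)
    (h : ∀ i, ∫ ω, F i ω ∂μ = ∫ ω, G i ω ∂μ) :
    ∫ ω, ∑ i, F i ω ∂μ = ∫ ω, ∑ i, G i ω ∂μ := by
  rw [integral_finsetSum _ fun i _ => hF i, integral_finsetSum _ fun i _ => hG i]
  exact Finset.sum_congr rfl fun i _ => h i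

theorem ProbabilityTheory.IndepFun.integral_mul_integral_comp {I Y : Ω → ℝ} {f : ℝ → ℝ} (h : IndepFun I Y μ)
    (hf : Measurable f) (hI : AEStronglyMeasurable I μ)
    (hfY : AEStronglyMeasurable (fun ω => f (Y ω)) μ) :
    ∫ ω, I ω * ∫ ω', f (Y ω') ∂μ ∂μ = ∫ ω, I ω * f (Y ω) ∂μ := by
  rw [integral_mul_const]
  exact ((h.comp measurable_id hf).integral_mul_eq_mul_integral hI hfY).symm

end Integral

theorem stmt_7_general {Ω : Type*} [MeasurableSpace Ω] (μ : Measure Ω) [IsProbabilityMeasure μ]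
    (n : ℕ) (X A I : Fin n → Ω → ℝ) (τ c : Fin n → ℝ)
    (hAm : ∀ i, Measurable (A i))
    (hIm : ∀ i, Measurable (I i))
    (hXpos : ∀ i ω, 0 ≤ X i ω) (hτ : ∀ i, 0 ≤ τ i)
    (hA01 : ∀ i ω, A i ω = 0 ∨ A i ω = 1) (hI01 : ∀ i ω, I i ω = 0 ∨ I i ω = 1)
    (hAI : ∀ i, ∀ᵐ ω ∂μ, A i ω ≤ I i ω)
    (hsum : ∀ᵐ ω ∂μ, ∑ i, A i ω ≤ 1)
    (hindep : ∀ i, IndepFun (I i) (X i) μ)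
    (hc : ∀ i, c i = ∫ ω, max (X i ω - τ i) 0 ∂μ)
    (hXint : ∀ i, Integrable (X i) μ)
    (hmaxint : Integrable (fun ω => ⨆ i, min (X i ω) (τ i)) μ) :
    ∫ ω, (∑ i, (A i ω * X i ω - I i ω * c i)) ∂μ
      ≤ ∫ ω, (⨆ i, min (X i ω) (τ i)) ∂μ := by
  have hg : ∀ i, Integrable (fun ω => max (X i ω - τ i) 0) μ := fun i =>
    ((hXint i).sub (integrable_const _)).pos_part
  have hI : ∀ i, Integrable (I i) μ := fun i =>
    .of_bound (hIm i).aestronglyMeasurable 1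
      (ae_of_all _ fun ω => norm_le_one_of_eq_zero_or_eq_one (hI01 i ω))
  have hAX : ∀ i, Integrable (fun ω => A i ω * X i ω) μ := fun i =>
    (hXint i).bdd_mul (hAm i).aestronglyMeasurable
      (ae_of_all _ fun ω => norm_le_one_of_eq_zero_or_eq_one (hA01 i ω))
  have hIg : ∀ i, Integrable (fun ω => I i ω * max (X i ω - τ i) 0) μ := fun i =>
    (hg i).bdd_mul (hIm i).aestronglyMeasurable
      (ae_of_all _ fun ω => norm_le_one_of_eq_zero_or_eq_one (hI01 i ω))
  have hcost : ∀ i, ∫ ω, I i ω * c i ∂μ = ∫ ω, I i ω * max (X i ω - τ i) 0 ∂μ := fun i => by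
    rw [hc i]
    exact (hindep i).integral_mul_integral_comp (measurable_id.sub_const _ |>.max measurable_const)
      (hIm i).aestronglyMeasurable (hg i).aestronglyMeasurable
  calc ∫ ω, ∑ i, (A i ω * X i ω - I i ω * c i) ∂μ
      = ∫ ω, ∑ i, (A i ω * X i ω - I i ω * max (X i ω - τ i) 0) ∂μ :=
        integral_sum_congr (fun i => (hAX i).sub ((hI i).mul_const _))
          (fun i => (hAX i).sub (hIg i)) fun i => by
            rw [integral_sub (hAX i) ((hI i).mul_const _), integral_sub (hAX i) (hIg i), hcost i]
    _ ≤ ∫ ω, ⨆ i, min (X i ω) (τ i) ∂μ := by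
        refine integral_mono_ae (integrable_finsetSum _ fun i _ => (hAX i).sub (hIg i)) hmaxint ?_
        filter_upwards [ae_all_iff.2 hAI, hsum] with ω hAIω hsumω
        exact sum_mul_sub_mul_posPart_le_iSup_min
          (fun i => by rcases hA01 i ω with h | h <;> simp [h]) hAIω hsumω
          (fun i => hXpos i ω) hτ

theorem stmt_7 {Ω : Type*} [MeasurableSpace Ω] (μ : Measure Ω) [IsProbabilityMeasure μ]
    (n : ℕ) (X A I : Fin n → Ω → ℝ) (τ c : Fin n → ℝ)
    (hXm : ∀ i, Measurable (X i)) (hAm : ∀ i, Measurable (A i))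
    (hIm : ∀ i, Measurable (I i))
    (hXpos : ∀ i ω, 0 ≤ X i ω) (hτ : ∀ i, 0 ≤ τ i)
    (hA01 : ∀ i ω, A i ω = 0 ∨ A i ω = 1) (hI01 : ∀ i ω, I i ω = 0 ∨ I i ω = 1)
    (hAI : ∀ i, ∀ᵐ ω ∂μ, A i ω ≤ I i ω)
    (hsum : ∀ᵐ ω ∂μ, ∑ i, A i ω ≤ 1)
    (hXindep : iIndepFun X μ)
    (hindep : ∀ i, IndepFun (I i) (X i) μ)
    (hc : ∀ i, c i = ∫ ω, max (X i ω - τ i) 0 ∂μ)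
    (hXint : ∀ i, Integrable (X i) μ)
    (hmaxint : Integrable (fun ω => ⨆ i, min (X i ω) (τ i)) μ) :
    ∫ ω, (∑ i, (A i ω * X i ω - I i ω * c i)) ∂μ
      ≤ ∫ ω, (⨆ i, min (X i ω) (τ i)) ∂μ :=
  stmt_7_general μ n X A I τ c hAm hIm hXpos hτ hA01 hI01 hAI hsum hindep hc hXint hmaxint
end

section
/- Under the assumptions of the payoff upper bound (Aᵢ ≤ Iᵢ a.s., ∑ᵢ Aᵢ ≤ 1 a.s., Iᵢ independent of Xᵢ, cᵢ = E[(Xᵢ − τᵢ)₊]), if additionally the policy is non-exposed, i.e., Iᵢ (Xᵢ − τᵢ)₊ = Aᵢ (Xᵢ − τᵢ)₊ almost surely for every i, then E[∑ᵢ (Aᵢ Xᵢ − Iᵢ cᵢ)] = E[∑ᵢ Aᵢ κᵢ] where κᵢ = min(Xᵢ, τᵢ). -/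
/-!
Split the prize as `X = min X τ + (X - τ)₊`. By independence, the expected opening cost
`E[I · c]` equals `E[I · (X - τ)₊]`, and non-exposure turns this into `E[A · (X - τ)₊]`,
which cancels the excess part of `E[A · X]`; what remains is `E[A · min X τ]`. Summing over the
boxes gives the theorem.
-/

open MeasureTheory ProbabilityTheory

theorem min_add_max_sub_zero (x t : ℝ) : min x t + max (x - t) 0 = x := by
  rcases le_total x t with h | h
  · rw [min_eq_left h, max_eq_right (by linarith)]; ring
  · rw [min_eq_right h, max_eq_left (by linarith)]; ring

section

variable {Ω : Type*} [MeasurableSpace Ω] {μ : Measure Ω}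

theorem MeasureTheory.Integrable.mul_of_eq_zero_or_eq_one {A Y : Ω → ℝ} (hY : Integrable Y μ)
    (hA : AEStronglyMeasurable A μ) (hA01 : ∀ ω, A ω = 0 ∨ A ω = 1) :
    Integrable (fun ω => A ω * Y ω) μ :=
  hY.bdd_mul hA (c := 1) <| ae_of_all _ fun ω => by rcases hA01 ω with h | h <;> simp [h]

theorem integral_mul_integral_eq_of_indepFun {I Y : Ω → ℝ} (hIY : IndepFun I Y μ)
    (hI : AEStronglyMeasurable I μ) (hY : AEStronglyMeasurable Y μ) :
    ∫ ω, I ω * ∫ ω', Y ω' ∂μ ∂μ = ∫ ω, I ω * Y ω ∂μ := by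
  rw [integral_mul_const]
  exact (hIY.integral_mul_eq_mul_integral hI hY).symm

theorem integral_mul_sub_mul_expected_excess_eq_of_nonexposed [IsFiniteMeasure μ]
    {X A I : Ω → ℝ} (τ : ℝ) (hX : Integrable X μ)
    (hA : AEStronglyMeasurable A μ) (hA01 : ∀ ω, A ω = 0 ∨ A ω = 1)
    (hI : AEStronglyMeasurable I μ) (hI01 : ∀ ω, I ω = 0 ∨ I ω = 1) (hIX : IndepFun I X μ)
    (hnonexposed : ∀ᵐ ω ∂μ, I ω * max (X ω - τ) 0 = A ω * max (X ω - τ) 0) :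
    ∫ ω, (A ω * X ω - I ω * ∫ ω', max (X ω' - τ) 0 ∂μ) ∂μ
      = ∫ ω, A ω * min (X ω) τ ∂μ := by
  have hexcess : Integrable (fun ω => max (X ω - τ) 0) μ :=
    (hX.sub (integrable_const τ)).pos_part
  have hmin : Integrable (fun ω => min (X ω) τ) μ := hX.inf (integrable_const τ)
  have hcost : ∫ ω, I ω * ∫ ω', max (X ω' - τ) 0 ∂μ ∂μ = ∫ ω, A ω * max (X ω - τ) 0 ∂μ := by
    have hIexcess : IndepFun I (fun ω => max (X ω - τ) 0) μ :=
      hIX.comp measurable_id ((measurable_id.sub_const τ).max measurable_const)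
    rw [integral_mul_integral_eq_of_indepFun hIexcess hI hexcess.aestronglyMeasurable]
    exact integral_congr_ae hnonexposed
  have hsplit : ∫ ω, A ω * X ω ∂μ
      = ∫ ω, A ω * min (X ω) τ ∂μ + ∫ ω, A ω * max (X ω - τ) 0 ∂μ := by
    rw [← integral_add (hmin.mul_of_eq_zero_or_eq_one hA hA01)
      (hexcess.mul_of_eq_zero_or_eq_one hA hA01)]
    simp only [← mul_add, min_add_max_sub_zero]
  rw [integral_sub (hX.mul_of_eq_zero_or_eq_one hA hA01)
    ((integrable_const _).mul_of_eq_zero_or_eq_one hI hI01), hcost, hsplit, add_sub_cancel_right]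

end

theorem stmt_8_general {Ω : Type*} [MeasurableSpace Ω] (μ : Measure Ω) [IsProbabilityMeasure μ]
    (n : ℕ) (X A I : Fin n → Ω → ℝ) (τ c : Fin n → ℝ)
    (hAm : ∀ i, Measurable (A i))
    (hIm : ∀ i, Measurable (I i))
    (hA01 : ∀ i ω, A i ω = 0 ∨ A i ω = 1) (hI01 : ∀ i ω, I i ω = 0 ∨ I i ω = 1)
    (hindep : ∀ i, IndepFun (I i) (X i) μ)
    (hc : ∀ i, c i = ∫ ω, max (X i ω - τ i) 0 ∂μ)
    (hXint : ∀ i, Integrable (X i) μ)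
    (hnonexposed : ∀ i, ∀ᵐ ω ∂μ,
      I i ω * max (X i ω - τ i) 0 = A i ω * max (X i ω - τ i) 0) :
    ∫ ω, (∑ i, (A i ω * X i ω - I i ω * c i)) ∂μ
      = ∫ ω, (∑ i, A i ω * min (X i ω) (τ i)) ∂μ := by
  have hA i := (hAm i).aestronglyMeasurable (μ := μ)
  have hI i := (hIm i).aestronglyMeasurable (μ := μ)
  have hsummand : ∀ i, Integrable (fun ω => A i ω * X i ω - I i ω * c i) μ := fun i =>
    ((hXint i).mul_of_eq_zero_or_eq_one (hA i) (hA01 i)).sub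
      ((integrable_const (c i)).mul_of_eq_zero_or_eq_one (hI i) (hI01 i))
  have hAmin : ∀ i, Integrable (fun ω => A i ω * min (X i ω) (τ i)) μ := fun i =>
    ((hXint i).inf (integrable_const (τ i))).mul_of_eq_zero_or_eq_one (hA i) (hA01 i)
  rw [integral_finsetSum _ fun i _ => hsummand i, integral_finsetSum _ fun i _ => hAmin i]
  refine Finset.sum_congr rfl fun i _ => ?_
  rw [hc i]
  exact integral_mul_sub_mul_expected_excess_eq_of_nonexposed (τ i) (hXint i) (hA i) (hA01 i)
    (hI i) (hI01 i) (hindep i) (hnonexposed i)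

theorem stmt_8 {Ω : Type*} [MeasurableSpace Ω] (μ : Measure Ω) [IsProbabilityMeasure μ]
    (n : ℕ) (X A I : Fin n → Ω → ℝ) (τ c : Fin n → ℝ)
    (hXm : ∀ i, Measurable (X i)) (hAm : ∀ i, Measurable (A i))
    (hIm : ∀ i, Measurable (I i))
    (hXpos : ∀ i ω, 0 ≤ X i ω) (hτ : ∀ i, 0 ≤ τ i)
    (hA01 : ∀ i ω, A i ω = 0 ∨ A i ω = 1) (hI01 : ∀ i ω, I i ω = 0 ∨ I i ω = 1)
    (hAI : ∀ i, ∀ᵐ ω ∂μ, A i ω ≤ I i ω)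
    (hsum : ∀ᵐ ω ∂μ, ∑ i, A i ω ≤ 1)
    (hindep : ∀ i, IndepFun (I i) (X i) μ)
    (hc : ∀ i, c i = ∫ ω, max (X i ω - τ i) 0 ∂μ)
    (hXint : ∀ i, Integrable (X i) μ)
    (hnonexposed : ∀ i, ∀ᵐ ω ∂μ,
      I i ω * max (X i ω - τ i) 0 = A i ω * max (X i ω - τ i) 0) :
    ∫ ω, (∑ i, (A i ω * X i ω - I i ω * c i)) ∂μ
      = ∫ ω, (∑ i, A i ω * min (X i ω) (τ i)) ∂μ :=
  stmt_8_general μ n X A I τ c hAm hIm hA01 hI01 hindep hc hXint hnonexposed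
end

section
/- Let S be a finite index set, v ≥ 0 a real number, and κᵢ (i ∈ S) independent real random variables. Suppose that for every i ∈ S, the probability that for all j ≠ i we have κⱼ ≤ v is at least 1 − ε, for some ε ∈ [0,1]. Then E[(max_{i∈S} κᵢ − v)₊] ≥ (1 − ε) · ∑_{i∈S} E[(κᵢ − v)₊]. -/
open MeasureTheory ProbabilityTheory

/-! On the event that every `κ j` with `j ≠ i` is at most `v`, the term `(κ i - v)₊` is the only
one among the `(κ j - v)₊` that can be positive, so the sum over `i` of these terms restricted to
their events is pointwise at most `(max κ - v)₊`. The `i`-th event depends only on the `κ j` with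
`j ≠ i`, so by independence the `i`-th restricted term has expectation
`P(event) · E[(κ i - v)₊] ≥ (1 - ε) · E[(κ i - v)₊]`. -/

lemma posPart_sub_le_posPart_sup'_sub {ι : Type*} {S : Finset ι} (hS : S.Nonempty) (x : ι → ℝ)
    (v : ℝ) {i : ι} (hi : i ∈ S) : max (x i - v) 0 ≤ max (S.sup' hS x - v) 0 :=
  max_le_max (sub_le_sub_right (S.le_sup' x hi) v) le_rfl

lemma sum_indicator_posPart_sub_le_posPart_sup'_sub {ι : Type*} {S : Finset ι} (hS : S.Nonempty)
    (x : ι → ℝ) (v : ℝ) :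
    ∑ i ∈ S, {y : ι → ℝ | ∀ j ∈ S, j ≠ i → y j ≤ v}.indicator (fun y ↦ max (y i - v) 0) x
      ≤ max (S.sup' hS x - v) 0 := by
  set A : ι → Set (ι → ℝ) := fun i ↦ {y | ∀ j ∈ S, j ≠ i → y j ≤ v}
  by_cases h : ∃ i ∈ S, x ∈ A i ∧ v < x i
  · obtain ⟨i, hi, hxi, -⟩ := h
    have h_others : ∀ j ∈ S, j ≠ i → max (x j - v) 0 = 0 := fun j hj hji ↦
      max_eq_right (sub_nonpos.2 (hxi j hj hji))
    rw [Finset.sum_eq_single_of_mem i hi fun j hj hji ↦ by simp [h_others j hj hji]]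
    exact (Set.indicator_le_self' (fun _ _ ↦ le_max_right _ _) x).trans
      (posPart_sub_le_posPart_sup'_sub hS x v hi)
  · push Not at h
    have h_zero : ∀ i ∈ S, (A i).indicator (fun y ↦ max (y i - v) 0) x = 0 := fun i hi ↦
      Set.indicator_apply_eq_zero.2 fun hxi ↦ max_eq_right (sub_nonpos.2 (h i hi hxi))
    rw [Finset.sum_eq_zero h_zero]
    exact le_max_right _ _

section

variable {Ω ι β : Type*} [DecidableEq ι] {κ : ι → Ω → β}

lemma setOf_forall_ne_mem_eq_preimage (S : Finset ι) (i : ι) (B : Set β) :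
    {ω | ∀ j ∈ S, j ≠ i → κ j ω ∈ B}
      = (fun ω (j : S.erase i) ↦ κ j ω) ⁻¹' Set.univ.pi fun _ ↦ B := by
  ext ω
  simp only [Set.mem_preimage, Set.mem_univ_pi, Subtype.forall, Finset.mem_erase]
  exact ⟨fun h j ⟨hji, hj⟩ ↦ h j hj hji, fun h j hj hji ↦ h j ⟨hji, hj⟩⟩

variable [MeasurableSpace Ω] [MeasurableSpace β]

lemma measurableSet_setOf_forall_ne_mem (hmeas : ∀ i, Measurable (κ i)) (S : Finset ι) (i : ι)
    {B : Set β} (hB : MeasurableSet B) : MeasurableSet {ω | ∀ j ∈ S, j ≠ i → κ j ω ∈ B} := by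
  rw [setOf_forall_ne_mem_eq_preimage]
  exact measurable_pi_lambda _ (fun j : S.erase i ↦ hmeas j) (MeasurableSet.univ_pi fun _ ↦ hB)

end

namespace ProbabilityTheory

lemma iIndepFun.indepFun_finset_of_notMem {Ω ι β : Type*} [MeasurableSpace Ω] [MeasurableSpace β]
    {μ : Measure Ω} {f : ι → Ω → β} (hf_indep : iIndepFun f μ) (hf_meas : ∀ i, Measurable (f i))
    {i : ι} {T : Finset ι} (hi : i ∉ T) :
    IndepFun (f i) (fun ω (j : T) ↦ f j ω) μ :=
  (hf_indep.indepFun_finset {i} T (Finset.disjoint_singleton_left.2 hi) hf_meas).comp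
    (measurable_pi_apply (⟨i, Finset.mem_singleton_self i⟩ : ({i} : Finset ι))) measurable_id

lemma IndepFun.integral_indicator_preimage {Ω β : Type*} [MeasurableSpace Ω] [MeasurableSpace β]
    {μ : Measure Ω} {X : Ω → ℝ} {Y : Ω → β} (hXY : IndepFun X Y μ)
    (hX : AEStronglyMeasurable X μ) (hY : Measurable Y) {B : Set β} (hB : MeasurableSet B) :
    ∫ ω, (Y ⁻¹' B).indicator X ω ∂μ = μ.real (Y ⁻¹' B) * ∫ ω, X ω ∂μ := by
  have h_indep : IndepFun X (B.indicator (1 : β → ℝ) ∘ Y) μ :=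
    hXY.comp measurable_id (measurable_one.indicator hB)
  have h_mul : (Y ⁻¹' B).indicator X = X * (B.indicator (1 : β → ℝ) ∘ Y) := by
    ext ω
    by_cases hω : Y ω ∈ B <;> simp [hω]
  rw [h_mul, h_indep.integral_mul_eq_mul_integral hX
    ((measurable_one.indicator hB).comp hY).aestronglyMeasurable, mul_comm]
  congr
  exact integral_indicator_one (hY hB)

lemma iIndepFun.integral_indicator_forall_ne_mem {Ω ι β : Type*} [MeasurableSpace Ω]
    [MeasurableSpace β] [DecidableEq ι] {κ : ι → Ω → β} {μ : Measure Ω} (hindep : iIndepFun κ μ)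
    (hmeas : ∀ i, Measurable (κ i)) (S : Finset ι) (i : ι) {f : β → ℝ} (hf : Measurable f)
    {B : Set β} (hB : MeasurableSet B) :
    ∫ ω, {ω | ∀ j ∈ S, j ≠ i → κ j ω ∈ B}.indicator (fun ω ↦ f (κ i ω)) ω ∂μ
      = μ.real {ω | ∀ j ∈ S, j ≠ i → κ j ω ∈ B} * ∫ ω, f (κ i ω) ∂μ := by
  rw [setOf_forall_ne_mem_eq_preimage]
  exact ((hindep.indepFun_finset_of_notMem hmeas (S.notMem_erase i)).comp hf measurable_id
    |>.integral_indicator_preimage (hf.comp (hmeas i)).aestronglyMeasurable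
      (measurable_pi_lambda _ fun j : S.erase i ↦ hmeas j) (MeasurableSet.univ_pi fun _ ↦ hB))

end ProbabilityTheory

theorem stmt_10_general {Ω ι : Type*} [MeasurableSpace Ω] (μ : Measure Ω) [IsProbabilityMeasure μ]
    (S : Finset ι) (hS : S.Nonempty) (κ : ι → Ω → ℝ) (v ε : ℝ)
    (hmeas : ∀ i, Measurable (κ i))
    (hintmax : Integrable (fun ω => max (S.sup' hS (fun i => κ i ω) - v) 0) μ)
    (hindep : iIndepFun κ μ)
    (hcover : ∀ i ∈ S, ENNReal.ofReal (1 - ε) ≤ μ {ω | ∀ j ∈ S, j ≠ i → κ j ω ≤ v}) :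
    (1 - ε) * ∑ i ∈ S, ∫ ω, max (κ i ω - v) 0 ∂μ
      ≤ ∫ ω, max (S.sup' hS (fun i => κ i ω) - v) 0 ∂μ := by
  classical
  set A : ι → Set Ω := fun i ↦ {ω | ∀ j ∈ S, j ≠ i → κ j ω ∈ Set.Iic v}
  set g : ι → Ω → ℝ := fun i ω ↦ max (κ i ω - v) 0
  have hφ : Measurable fun x : ℝ ↦ max (x - v) 0 := by fun_prop
  have h_pointwise (ω : Ω) : ∑ i ∈ S, (A i).indicator (g i) ω ≤ max (S.sup' hS (κ · ω) - v) 0 :=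
    sum_indicator_posPart_sub_le_posPart_sup'_sub hS (κ · ω) v
  have h_int (i : ι) (hi : i ∈ S) : Integrable ((A i).indicator (g i)) μ := by
    refine hintmax.mono' (((hφ.comp (hmeas i)).indicator
      (measurableSet_setOf_forall_ne_mem hmeas S i measurableSet_Iic)).aestronglyMeasurable)
      (ae_of_all _ fun ω ↦ ?_)
    rw [Real.norm_of_nonneg (Set.indicator_nonneg (fun _ _ ↦ le_max_right _ _) ω)]
    exact (Set.indicator_le_self' (fun _ _ ↦ le_max_right _ _) ω).trans
      (posPart_sub_le_posPart_sup'_sub hS (κ · ω) v hi)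
  have h_term (i : ι) (hi : i ∈ S) : (1 - ε) * ∫ ω, g i ω ∂μ ≤ ∫ ω, (A i).indicator (g i) ω ∂μ := by
    rw [hindep.integral_indicator_forall_ne_mem hmeas S i hφ measurableSet_Iic]
    exact mul_le_mul_of_nonneg_right
      ((ENNReal.ofReal_le_iff_le_toReal (measure_ne_top μ _)).1 (hcover i hi))
      (integral_nonneg fun ω ↦ le_max_right _ _)
  calc (1 - ε) * ∑ i ∈ S, ∫ ω, g i ω ∂μ
      = ∑ i ∈ S, (1 - ε) * ∫ ω, g i ω ∂μ := Finset.mul_sum _ _ _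
    _ ≤ ∑ i ∈ S, ∫ ω, (A i).indicator (g i) ω ∂μ := Finset.sum_le_sum h_term
    _ = ∫ ω, ∑ i ∈ S, (A i).indicator (g i) ω ∂μ := (integral_finsetSum S h_int).symm
    _ ≤ ∫ ω, max (S.sup' hS (κ · ω) - v) 0 ∂μ :=
      integral_mono (integrable_finsetSum S h_int) hintmax h_pointwise

theorem stmt_10 {Ω ι : Type*} [MeasurableSpace Ω] (μ : Measure Ω) [IsProbabilityMeasure μ]
    (S : Finset ι) (hS : S.Nonempty) (κ : ι → Ω → ℝ) (v ε : ℝ) (hv : 0 ≤ v)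
    (hε0 : 0 ≤ ε) (hε1 : ε ≤ 1)
    (hmeas : ∀ i, Measurable (κ i))
    (hint : ∀ i, Integrable (κ i) μ)
    (hintmax : Integrable (fun ω => max (S.sup' hS (fun i => κ i ω) - v) 0) μ)
    (hindep : iIndepFun κ μ)
    (hcover : ∀ i ∈ S, ENNReal.ofReal (1 - ε) ≤ μ {ω | ∀ j ∈ S, j ≠ i → κ j ω ≤ v}) :
    (1 - ε) * ∑ i ∈ S, ∫ ω, max (κ i ω - v) 0 ∂μ
      ≤ ∫ ω, max (S.sup' hS (fun i => κ i ω) - v) 0 ∂μ :=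
  stmt_10_general μ S hS κ v ε hmeas hintmax hindep hcover
end
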